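/- arXiv:2604.12166 — 8 statements merged into one kernel-verified Lean document; each statement's English description precedes it below -/
import Mathlib

section
/- If h is strongly quasiconvex with modulus γ ≥ 0 on a convex neighborhood V of x̄ ∈ dom h, and v belongs to the regular (Fréchet) subdifferential of h at x̄, then ⟨v, y − x̄⟩ ≤ −(γ/2)‖y − x̄‖² for all y ∈ S_h(x̄) ∩ V, where S_h(x̄) = {y : h(y) ≤ h(x̄)}. -/
open RealInnerProductSpace Set Filter Topology

theorem frechet_subgradient_mem_strong_subdifferential
    {E : Type*} [NormedAddCommGroup E] [InnerProductSpace ℝ E]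
    (h : E → EReal) (hproper : ∀ x, h x ≠ ⊥)
    (γ : ℝ) (hγ : 0 ≤ γ)
    (xb : E) (hdom : h xb ≠ ⊤)
    (V : Set E) (hV : V ∈ nhds xb) (hVconv : Convex ℝ V)
    (hsqc : ∀ x ∈ V, ∀ y ∈ V, ∀ l ∈ Icc (0:ℝ) 1,
      h (l • y + (1 - l) • x) ≤
        max (h y) (h x) - ((l * (1 - l) * (γ / 2) * ‖x - y‖ ^ 2 : ℝ) : EReal))
    (v : E)
    (hv : ∀ ε > (0:ℝ), ∀ᶠ y in nhds xb,
      h xb + ((⟪v, y - xb⟫ - ε * ‖y - xb‖ : ℝ) : EReal) ≤ h y) :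
    ∀ y ∈ V, h y ≤ h xb → ⟪v, y - xb⟫ ≤ -(γ / 2) * ‖y - xb‖ ^ 2 := by
  intro y hy hyle
  have hxbV : xb ∈ V := mem_of_mem_nhds hV
  set r : ℝ := (h xb).toReal with hrdef
  have hr : (r : EReal) = h xb := EReal.coe_toReal hdom (hproper xb)
  set a : ℝ := ⟪v, y - xb⟫ with hadef
  set n : ℝ := ‖y - xb‖ with hndef
  have hn0 : 0 ≤ n := norm_nonneg _
  have key : ∀ ε : ℝ, 0 < ε → ε < 1 → a ≤ -(γ/2) * n^2 + ε * (n + (γ/2) * n^2) := by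
    intro ε hε hε1
    have hcont : Tendsto (fun l : ℝ => l • y + (1 - l) • xb) (nhds 0) (nhds xb) := by
      have hc : Continuous (fun l : ℝ => l • y + (1 - l) • xb) := by continuity
      have h0 : (fun l : ℝ => l • y + (1 - l) • xb) 0 = xb := by simp
      simpa [h0] using hc.tendsto 0
    have hev : ∀ᶠ l : ℝ in nhds 0,
        h xb + ((⟪v, (l • y + (1 - l) • xb) - xb⟫
          - ε * ‖(l • y + (1 - l) • xb) - xb‖ : ℝ) : EReal) ≤ h (l • y + (1 - l) • xb) :=
      hcont.eventually (hv ε hε)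
    have hev2 : ∀ᶠ l : ℝ in nhds 0, |l - 0| < ε := eventually_abs_sub_lt 0 hε
    obtain ⟨l, ⟨hsub, habs⟩, hlpos⟩ :=
      (((hev.and hev2).filter_mono nhdsWithin_le_nhds).and
        (self_mem_nhdsWithin (s := Ioi (0:ℝ)) (a := (0:ℝ)))).exists
    have hlpos : (0:ℝ) < l := hlpos
    have hlε : l < ε := by have := abs_lt.mp habs; linarith [this.2]
    have hl1 : l < 1 := lt_trans hlε hε1
    -- simplify the point
    have hz : (l • y + (1 - l) • xb) - xb = l • (y - xb) := by
      rw [smul_sub]; module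
    have hznorm : ‖(l • y + (1 - l) • xb) - xb‖ = l * n := by
      rw [hz, norm_smul, Real.norm_eq_abs, abs_of_pos hlpos]
    have hzinner : ⟪v, (l • y + (1 - l) • xb) - xb⟫ = l * a := by
      rw [hz, real_inner_smul_right]
    -- strong quasiconvexity at this point
    have hsq := hsqc xb hxbV y hy l ⟨le_of_lt hlpos, le_of_lt hl1⟩
    have hmax : max (h y) (h xb) = h xb := max_eq_right hyle
    have hnsym : ‖xb - y‖ = n := by rw [hndef, norm_sub_rev]
    rw [hmax, hnsym] at hsq
    -- combine
    have hchain : h xb + ((l * a - ε * (l * n) : ℝ) : EReal)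
        ≤ h xb - ((l * (1 - l) * (γ / 2) * n ^ 2 : ℝ) : EReal) := by
      calc h xb + ((l * a - ε * (l * n) : ℝ) : EReal)
          = h xb + ((⟪v, (l • y + (1 - l) • xb) - xb⟫
              - ε * ‖(l • y + (1 - l) • xb) - xb‖ : ℝ) : EReal) := by
            rw [hzinner, hznorm]
        _ ≤ h (l • y + (1 - l) • xb) := hsub
        _ ≤ h xb - ((l * (1 - l) * (γ / 2) * n ^ 2 : ℝ) : EReal) := hsq
    rw [← hr] at hchain
    have hreal : r + (l * a - ε * (l * n)) ≤ r - l * (1 - l) * (γ / 2) * n ^ 2 := by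
      have : ((r + (l * a - ε * (l * n)) : ℝ) : EReal)
          ≤ ((r - l * (1 - l) * (γ / 2) * n ^ 2 : ℝ) : EReal) := by
        push_cast
        exact hchain
      exact_mod_cast this
    -- divide by l and use l < ε
    have h1 : a - ε * n ≤ -(1 - l) * (γ / 2) * n ^ 2 := by
      have hl' := hlpos
      nlinarith [hreal]
    nlinarith [mul_nonneg (mul_nonneg hlpos.le (by positivity : (0:ℝ) ≤ γ/2)) (sq_nonneg n),
      mul_le_mul_of_nonneg_right hlε.le (mul_nonneg (by positivity : (0:ℝ) ≤ γ/2) (sq_nonneg n))]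
  -- conclude by letting ε → 0
  refine le_of_forall_pos_le_add ?_
  intro ε' hε'
  obtain ⟨ε, hεpos, hε1, hεle⟩ :
      ∃ ε : ℝ, 0 < ε ∧ ε < 1 ∧ ε * (n + (γ/2) * n^2) ≤ ε' := by
    have hC : 0 ≤ n + (γ/2) * n^2 := by positivity
    have hden : (0:ℝ) < n + (γ/2) * n^2 + 1 := by linarith
    refine ⟨min (ε' / (n + (γ/2) * n^2 + 1)) (1/2), lt_min (by positivity) (by norm_num),
      lt_of_le_of_lt (min_le_right _ _) (by norm_num), ?_⟩
    have h1 : min (ε' / (n + (γ/2) * n^2 + 1)) (1/2) ≤ ε' / (n + (γ/2) * n^2 + 1) :=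
      min_le_left _ _
    have h2 := mul_le_mul_of_nonneg_right h1 hC
    have h3 : (ε' / (n + (γ/2) * n^2 + 1)) * (n + (γ/2) * n^2) ≤ ε' := by
      rw [div_mul_eq_mul_div, div_le_iff₀ hden]
      nlinarith
    linarith
  have hk := key ε hεpos hε1
  linarith
end

section
/- For any proper function h : ℝⁿ → ℝ ∪ {+∞}, any x̄ ∈ dom h, and any β, γ > 0, if ξ satisfies max{h(y), h(x̄)} ≥ h(x̄) + (λ/β)⟨ξ, y − x̄⟩ + (λ/2)(γ − λ/β − λγ)‖y − x̄‖² for all y ∈ ℝⁿ and all λ ∈ [0,1], then ξ belongs to the Greenberg–Pierskalla subdifferential of h at x̄, i.e., ⟨ξ, y − x̄⟩ ≥ 0 implies h(y) ≥ h(x̄). -/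
/-!
Suppose `⟪ξ, y - x̄⟫ ≥ 0` but `h y < h x̄`. Then the maximum in the hypothesis is `h x̄`, so the
real increment `(λ/β)⟪ξ, y - x̄⟫ + (λ/2)(γ - λ/β - λγ)‖y - x̄‖²` must be `≤ 0`. For
`λ = βγ / (2(1 + βγ))` the quadratic coefficient equals `γ/2 > 0`, and `y ≠ x̄`, so the increment
is positive: a contradiction, since `h x̄` is finite.
-/

open RealInnerProductSpace Set

namespace EReal

theorem le_of_add_le_max {a b : EReal} (ha : a ≠ ⊤) {c : ℝ} (hc : 0 < c)
    (h : a + c ≤ max b a) : a ≤ b := by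
  by_contra! hba
  rw [max_eq_right hba.le] at h
  lift a to ℝ using ⟨ha, hba.ne_bot⟩
  have : a + c ≤ a := mod_cast h
  linarith

end EReal

theorem exists_mem_Ioc_sub_div_sub_mul_pos {β γ : ℝ} (hβ : 0 < β) (hγ : 0 < γ) :
    ∃ l ∈ Ioc (0:ℝ) 1, 0 < γ - l / β - l * γ := by
  have hβγ : 0 < β * γ := mul_pos hβ hγ
  refine ⟨β * γ / (2 * (1 + β * γ)), ⟨by positivity, ?_⟩, ?_⟩
  · rw [div_le_one (by positivity)]
    linarith
  · have : γ - β * γ / (2 * (1 + β * γ)) / β - β * γ / (2 * (1 + β * γ)) * γ = γ / 2 := by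
      field_simp
      ring
    linarith

theorem strong_subdifferential_subset_greenberg_pierskalla_general
    {E : Type*} [NormedAddCommGroup E] [InnerProductSpace ℝ E]
    (h : E → EReal)
    (xb : E) (hdom : h xb ≠ ⊤)
    (β γ : ℝ) (hβ : 0 < β) (hγ : 0 < γ)
    (ξ : E)
    (hξ : ∀ y : E, ∀ l ∈ Icc (0:ℝ) 1,
      h xb + (((l / β) * ⟪ξ, y - xb⟫
        + (l / 2) * (γ - l / β - l * γ) * ‖y - xb‖ ^ 2 : ℝ) : EReal)
        ≤ max (h y) (h xb)) :
    ∀ y : E, 0 ≤ ⟪ξ, y - xb⟫ → h xb ≤ h y := by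
  intro y hy
  rcases eq_or_ne y xb with rfl | hne
  · rfl
  obtain ⟨l, ⟨hl0, hl1⟩, hcoef⟩ := exists_mem_Ioc_sub_div_sub_mul_pos hβ hγ
  have hinc : 0 < (l / β) * ⟪ξ, y - xb⟫ + (l / 2) * (γ - l / β - l * γ) * ‖y - xb‖ ^ 2 := by
    have hd : 0 < ‖y - xb‖ := norm_pos_iff.mpr (sub_ne_zero.mpr hne)
    positivity
  exact EReal.le_of_add_le_max hdom hinc (hξ y l ⟨hl0.le, hl1⟩)

theorem strong_subdifferential_subset_greenberg_pierskalla
    {E : Type*} [NormedAddCommGroup E] [InnerProductSpace ℝ E]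
    (h : E → EReal) (hproper : ∀ x, h x ≠ ⊥)
    (xb : E) (hdom : h xb ≠ ⊤)
    (β γ : ℝ) (hβ : 0 < β) (hγ : 0 < γ)
    (ξ : E)
    (hξ : ∀ y : E, ∀ l ∈ Icc (0:ℝ) 1,
      h xb + (((l / β) * ⟪ξ, y - xb⟫
        + (l / 2) * (γ - l / β - l * γ) * ‖y - xb‖ ^ 2 : ℝ) : EReal)
        ≤ max (h y) (h xb)) :
    ∀ y : E, 0 ≤ ⟪ξ, y - xb⟫ → h xb ≤ h y :=
  strong_subdifferential_subset_greenberg_pierskalla_general h xb hdom β γ hβ hγ ξ hξ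
end

section
/- Let g_j, j ∈ I (finite) be extended-real-valued functions on ℝⁿ, g := sup_{j∈I} g_j, x̄ ∈ dom g, I(x̄) := {j : g_j(x̄) = g(x̄)}, K ⊂ ∩_{j∈I(x̄)} K_j, and γ_m := min_{j∈I(x̄)} γ_j. Then the closed convex hull of ∪_{j∈I(x̄)} ∂^{K_j}_{β,γ_j} g_j(x̄) is contained in ∂^{K}_{β,γ_m} g(x̄). -/
/-!
For fixed `y` and `λ` the defining inequality of `∂^K_{β,γ} h(x̄)` asks that an affine function
of `ξ` lie in the closed down-set `{t : ℝ | h x̄ + t ≤ M}` of `ℝ`, so strong subdifferentials are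
closed and convex, and it suffices to put each `∂^{K_j}_{β,γ_j} g_j(x̄)` with `j` active into the
right-hand side. That subdifferential only grows when `K_j` shrinks to `K` and `γ_j` decreases to
`γ_m` (the `γ`-dependence of the quadratic term is `λ(1-λ)γ/2 · ‖y - x̄‖²`), and when `g_j` is
replaced by `g ≥ g_j`, which agrees with it at `x̄`.
-/

open RealInnerProductSpace Set Filter Topology

variable {E : Type*} [NormedAddCommGroup E] [InnerProductSpace ℝ E]

/-- The `(β, γ, K)`-strong subdifferential of `h` at `x`. -/
def strongSubdiff (h : E → EReal) (K : Set E) (β γ : ℝ) (x : E) : Set E :=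
  {ξ | ∀ y ∈ K, ∀ l ∈ Icc (0:ℝ) 1,
    h x + (((l / β) * ⟪ξ, y - x⟫
      + (l / 2) * (γ - l / β - l * γ) * ‖y - x‖ ^ 2 : ℝ) : EReal)
      ≤ max (h y) (h x)}

namespace EReal

theorem continuous_add_coe (c : EReal) : Continuous fun t : ℝ => c + (t : EReal) :=
  continuous_iff_continuousAt.2 fun t =>
    (EReal.continuousAt_add (Or.inr (coe_ne_bot t)) (Or.inr (coe_ne_top t))).comp
      (continuous_const.prodMk continuous_coe_real_ereal).continuousAt

theorem monotone_add_coe (c : EReal) : Monotone fun t : ℝ => c + (t : EReal) :=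
  fun _ _ hst => add_le_add_right (EReal.coe_le_coe_iff.2 hst) c

theorem isClosed_setOf_add_coe_le (c M : EReal) : IsClosed {t : ℝ | c + (t : EReal) ≤ M} :=
  isClosed_le (continuous_add_coe c) continuous_const

theorem convex_setOf_add_coe_le (c M : EReal) : Convex ℝ {t : ℝ | c + (t : EReal) ≤ M} :=
  IsLowerSet.ordConnected (fun _ _ hst hs => (monotone_add_coe c hst).trans hs) |>.convex

end EReal

theorem isClosed_setOf_add_inner_le (c M : EReal) (a b : ℝ) (v : E) :
    IsClosed {ξ : E | c + ((a * ⟪ξ, v⟫ + b : ℝ) : EReal) ≤ M} :=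
  (EReal.isClosed_setOf_add_coe_le c M).preimage (by fun_prop)

theorem convex_setOf_add_inner_le (c M : EReal) (a b : ℝ) (v : E) :
    Convex ℝ {ξ : E | c + ((a * ⟪ξ, v⟫ + b : ℝ) : EReal) ≤ M} := by
  have hpre : {ξ : E | c + ((a * ⟪ξ, v⟫ + b : ℝ) : EReal) ≤ M} =
      ((a • innerₗ E v).toAffineMap + AffineMap.const ℝ E b) ⁻¹' {t : ℝ | c + (t : EReal) ≤ M} := by
    ext ξ
    simp [real_inner_comm]
  rw [hpre]
  exact (EReal.convex_setOf_add_coe_le c M).affine_preimage _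

theorem strongSubdiff_eq_iInter (h : E → EReal) (K : Set E) (β γ : ℝ) (x : E) :
    strongSubdiff h K β γ x = ⋂ y ∈ K, ⋂ l ∈ Icc (0:ℝ) 1,
      {ξ | h x + (((l / β) * ⟪ξ, y - x⟫
        + (l / 2) * (γ - l / β - l * γ) * ‖y - x‖ ^ 2 : ℝ) : EReal) ≤ max (h y) (h x)} := by
  ext ξ
  simp only [strongSubdiff, mem_iInter₂, mem_ofPred_eq]

section strongSubdiff

variable {h h' : E → EReal} {K K' : Set E} {β γ γ' : ℝ} {x : E}

theorem isClosed_strongSubdiff (h : E → EReal) (K : Set E) (β γ : ℝ) (x : E) :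
    IsClosed (strongSubdiff h K β γ x) := by
  rw [strongSubdiff_eq_iInter]
  exact isClosed_biInter fun _ _ => isClosed_biInter fun _ _ => isClosed_setOf_add_inner_le ..

theorem convex_strongSubdiff (h : E → EReal) (K : Set E) (β γ : ℝ) (x : E) :
    Convex ℝ (strongSubdiff h K β γ x) := by
  rw [strongSubdiff_eq_iInter]
  exact convex_iInter₂ fun _ _ => convex_iInter₂ fun _ _ => convex_setOf_add_inner_le ..

theorem strongSubdiff_antitone_set (hK : K ⊆ K') :
    strongSubdiff h K' β γ x ⊆ strongSubdiff h K β γ x :=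
  fun _ hξ y hy => hξ y (hK hy)

theorem strongSubdiff_antitone_modulus (hγ : γ ≤ γ') :
    strongSubdiff h K β γ' x ⊆ strongSubdiff h K β γ x := by
  intro ξ hξ y hy l hl
  refine le_trans (add_le_add_right (EReal.coe_le_coe_iff.2 ?_) _) (hξ y hy l hl)
  have hgap : 0 ≤ l / 2 * (1 - l) * (γ' - γ) * ‖y - x‖ ^ 2 :=
    mul_nonneg (mul_nonneg (mul_nonneg (by linarith [hl.1]) (sub_nonneg.2 hl.2))
      (sub_nonneg.2 hγ)) (sq_nonneg _)
  linarith

theorem strongSubdiff_subset_of_le_of_eq (hle : h ≤ h') (hx : h x = h' x) :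
    strongSubdiff h K β γ x ⊆ strongSubdiff h' K β γ x := by
  intro ξ hξ y hy l hl
  rw [← hx]
  exact (hξ y hy l hl).trans (max_le_max (hle y) le_rfl)

end strongSubdiff

theorem closed_convex_hull_union_strong_subdiff_subset_strong_subdiff_sup_general
    {I : Type*} [Fintype I] (g : I → E → EReal)
    (β : ℝ) (γ : I → ℝ)
    (K : Set E) (Kj : I → Set E) (xb : E)
    (hK : K ⊆ ⋂ j ∈ {j | g j xb = ⨆ i, g i xb}, Kj j)
    (γm : ℝ) (hγm : γm = sInf (γ '' {j | g j xb = ⨆ i, g i xb})) :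
    closure (convexHull ℝ
        (⋃ j ∈ {j | g j xb = ⨆ i, g i xb}, strongSubdiff (g j) (Kj j) β (γ j) xb))
      ⊆ strongSubdiff (fun x => ⨆ j, g j x) K β γm xb := by
  refine closure_minimal (convexHull_min (iUnion₂_subset fun j hj => ?_)
    (convex_strongSubdiff ..)) (isClosed_strongSubdiff ..)
  have hγj : γm ≤ γ j := hγm ▸ csInf_le (Set.toFinite _).bddBelow (mem_image_of_mem γ hj)
  calc strongSubdiff (g j) (Kj j) β (γ j) xb
      ⊆ strongSubdiff (g j) K β (γ j) xb :=
        strongSubdiff_antitone_set fun y hy => mem_iInter₂.1 (hK hy) j hj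
    _ ⊆ strongSubdiff (g j) K β γm xb := strongSubdiff_antitone_modulus hγj
    _ ⊆ strongSubdiff (fun x => ⨆ i, g i x) K β γm xb :=
        strongSubdiff_subset_of_le_of_eq (fun y => le_iSup (g · y) j) hj

theorem closed_convex_hull_union_strong_subdiff_subset_strong_subdiff_sup
    {I : Type*} [Fintype I] (g : I → E → EReal)
    (β : ℝ) (hβ : 0 < β) (γ : I → ℝ) (hγ : ∀ j, 0 ≤ γ j)
    (K : Set E) (Kj : I → Set E) (xb : E)
    (hdom : (⨆ j, g j xb) ≠ ⊤)
    (hne : {j | g j xb = ⨆ i, g i xb}.Nonempty)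
    (hK : K ⊆ ⋂ j ∈ {j | g j xb = ⨆ i, g i xb}, Kj j)
    (γm : ℝ) (hγm : γm = sInf (γ '' {j | g j xb = ⨆ i, g i xb})) :
    closure (convexHull ℝ
        (⋃ j ∈ {j | g j xb = ⨆ i, g i xb}, strongSubdiff (g j) (Kj j) β (γ j) xb))
      ⊆ strongSubdiff (fun x => ⨆ j, g j x) K β γm xb :=
  closed_convex_hull_union_strong_subdiff_subset_strong_subdiff_sup_general g β γ K Kj xb hK γm hγm
end

section
/- Let g_j, j ∈ I finite, with g := sup_j g_j, Ω := {x : g(x) ≤ 0} convex, x̄ ∈ dom g ∩ Ω, I(x̄) := {j : g_j(x̄) = 0}, and K_j sets with Ω ⊂ ∩_{j∈I(x̄)} K_j. Then for any multipliers μ ∈ ℝ₊^{|I(x̄)|}, the set Σ_{j: μ_j>0} μ_j ∂^{K_j}_{β_j,γ_j} g_j(x̄) + Σ_{j: μ_j=0} N_{g_j}(x̄) is contained in the limiting normal cone N(Ω, x̄); consequently so is the closure of the union over all μ. -/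
/-!
For `y ∈ Ω` and an active index `j`, `y` lies in `K_j` and in the sublevel set of `g_j` at `x̄`.
There the strong-subdifferential inequality, divided by `l / β_j` and with `l → 0⁺`, gives
`⟪ξ, y - x̄⟫ ≤ -(β_j γ_j / 2) ‖y - x̄‖² ≤ 0`. The normal cone is an intersection of closed
half-spaces, so the closure of the union stays inside it.
-/

open RealInnerProductSpace Set Filter Topology Pointwise

variable {E : Type*} [NormedAddCommGroup E] [InnerProductSpace ℝ E]

theorem inner_add_le_zero_of_mem_strongSubdiff {h : E → EReal} {K : Set E} {β γ : ℝ} (hβ : 0 < β)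
    {x ξ y : E} (hξ : ξ ∈ strongSubdiff h K β γ x) (hy : y ∈ K) (hx_bot : h x ≠ ⊥)
    (hx_top : h x ≠ ⊤) (hyx : h y ≤ h x) {l : ℝ} (hl : l ∈ Ioc (0 : ℝ) 1) :
    ⟪ξ, y - x⟫ + (β / 2) * (γ - l / β - l * γ) * ‖y - x‖ ^ 2 ≤ 0 := by
  obtain ⟨a, ha⟩ : ∃ a : ℝ, h x = a := ⟨(h x).toReal, (EReal.coe_toReal hx_top hx_bot).symm⟩
  have hdef := hξ y hy l (Ioc_subset_Icc_self hl)
  rw [max_eq_right hyx, ha, ← EReal.coe_add, EReal.coe_le_coe_iff] at hdef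
  have hscaled : (l / β) * (⟪ξ, y - x⟫ + (β / 2) * (γ - l / β - l * γ) * ‖y - x‖ ^ 2) ≤ 0 := by
    field_simp at hdef ⊢
    linarith
  exact nonpos_of_mul_nonpos_right hscaled (div_pos hl.1 hβ)

theorem inner_le_of_mem_strongSubdiff {h : E → EReal} {K : Set E} {β γ : ℝ} (hβ : 0 < β)
    {x ξ y : E} (hξ : ξ ∈ strongSubdiff h K β γ x) (hy : y ∈ K) (hx_bot : h x ≠ ⊥)
    (hx_top : h x ≠ ⊤) (hyx : h y ≤ h x) :
    ⟪ξ, y - x⟫ ≤ -(β * γ / 2) * ‖y - x‖ ^ 2 := by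
  have hlim : Tendsto (fun l : ℝ ↦ ⟪ξ, y - x⟫ + (β / 2) * (γ - l / β - l * γ) * ‖y - x‖ ^ 2)
      (𝓝[>] 0) (𝓝 (⟪ξ, y - x⟫ + (β / 2) * (γ - 0 / β - 0 * γ) * ‖y - x‖ ^ 2)) :=
    ((Continuous.tendsto (by fun_prop) 0).mono_left nhdsWithin_le_nhds)
  have hev : ∀ᶠ l in 𝓝[>] (0 : ℝ),
      ⟪ξ, y - x⟫ + (β / 2) * (γ - l / β - l * γ) * ‖y - x‖ ^ 2 ≤ 0 := by
    filter_upwards [Ioc_mem_nhdsGT zero_lt_one] with l hl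
    exact inner_add_le_zero_of_mem_strongSubdiff hβ hξ hy hx_bot hx_top hyx hl
  have hzero := le_of_tendsto hlim hev
  simp only [zero_div, zero_mul, sub_zero] at hzero
  linarith

theorem inner_sub_nonpos_of_mem_strongSubdiff {h : E → EReal} {K : Set E} {β γ : ℝ} (hβ : 0 < β)
    (hγ : 0 ≤ γ) {x ξ y : E} (hξ : ξ ∈ strongSubdiff h K β γ x) (hy : y ∈ K) (hx_bot : h x ≠ ⊥)
    (hx_top : h x ≠ ⊤) (hyx : h y ≤ h x) : ⟪ξ, y - x⟫ ≤ 0 :=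
  (inner_le_of_mem_strongSubdiff hβ hξ hy hx_bot hx_top hyx).trans <|
    mul_nonpos_of_nonpos_of_nonneg (neg_nonpos.2 (by positivity)) (by positivity)

theorem isClosed_setOf_forall_inner_sub_nonpos (S : Set E) (x : E) :
    IsClosed {v : E | ∀ y ∈ S, ⟪v, y - x⟫ ≤ 0} := by
  simp only [ofPred_forall]
  exact isClosed_biInter fun y _ ↦ isClosed_le (by fun_prop) continuous_const

theorem multiplier_sums_subset_normal_cone
    {I : Type*} [Fintype I] (g : I → E → EReal) (xb : E)
    [DecidablePred fun j : I => g j xb = 0]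
    (β γ : I → ℝ) (hβ : ∀ j, 0 < β j) (hγ : ∀ j, 0 ≤ γ j)
    (Kj : I → Set E)
    (hΩconv : Convex ℝ {x | (⨆ j, g j x) ≤ 0})
    (hxb : (⨆ j, g j xb) ≤ 0)
    (hK : {x | (⨆ j, g j x) ≤ 0} ⊆
      ⋂ j ∈ Finset.univ.filter (fun j : I => g j xb = 0), Kj j) :
    closure (⋃ μ ∈ {μ : I → ℝ | ∀ j, 0 ≤ μ j},
      {v : E | ∃ w : I → E,
        (∀ j ∈ Finset.univ.filter (fun j : I => g j xb = 0),
          (0 < μ j → w j ∈ μ j • strongSubdiff (g j) (Kj j) (β j) (γ j) xb) ∧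
          (μ j = 0 → ∀ y : E, g j y ≤ g j xb → ⟪w j, y - xb⟫ ≤ 0)) ∧
        v = ∑ j ∈ Finset.univ.filter (fun j : I => g j xb = 0), w j})
      ⊆ {v : E | ∀ y, (⨆ j, g j y) ≤ 0 → ⟪v, y - xb⟫ ≤ 0} := by
  refine closure_minimal ?_ (isClosed_setOf_forall_inner_sub_nonpos {y | (⨆ j, g j y) ≤ 0} xb)
  simp only [iUnion_subset_iff]
  rintro μ hμ _ ⟨w, hw, rfl⟩ y hy
  rw [sum_inner]
  refine Finset.sum_nonpos fun j hj ↦ ?_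
  have hgj : g j xb = 0 := (Finset.mem_filter.1 hj).2
  have hyx : g j y ≤ g j xb := hgj ▸ (le_iSup (g · y) j).trans hy
  rcases (hμ j).lt_or_eq with hpos | hzero
  · obtain ⟨ξ, hξ, hwj⟩ := (hw j hj).1 hpos
    have hyK : y ∈ Kj j := mem_iInter₂.1 (hK hy) j hj
    rw [← hwj, real_inner_smul_left]
    exact mul_nonpos_of_nonneg_of_nonpos (hμ j) <| inner_sub_nonpos_of_mem_strongSubdiff (hβ j)
      (hγ j) hξ hyK (by simp [hgj]) (by simp [hgj]) hyx
  · exact (hw j hj).2 hzero.symm y hyx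
end

section
/- Let f : ℝⁿ → ℝ ∪ {+∞} be lower semicontinuous, C ⊂ ℝⁿ closed and convex, and x̄ ∈ C a local minimizer of f over C. Then either there exists v ∈ ∂f(x̄) (limiting subdifferential) with 0 ∈ v + N(C, x̄), or there exists v^∞ ∈ ∂^∞f(x̄) (horizon subdifferential) with ‖v^∞‖ = 1 and 0 ∈ v^∞ + N(C, x̄). -/
open RealInnerProductSpace Set Filter Topology

variable {E : Type*} [NormedAddCommGroup E] [InnerProductSpace ℝ E]

/-- The regular (Fréchet) subdifferential of `f` at `x`. -/
def frechetSubdiff (f : E → EReal) (x : E) : Set E :=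
  {v | ∀ ε > (0:ℝ), ∀ᶠ y in nhds x,
    f x + ((⟪v, y - x⟫ - ε * ‖y - x‖ : ℝ) : EReal) ≤ f y}

/-- The limiting (Mordukhovich) subdifferential of `f` at `x`. -/
def limitingSubdiff (f : E → EReal) (x : E) : Set E :=
  {v | ∃ (xs vs : ℕ → E),
    Tendsto xs atTop (nhds x) ∧
    Tendsto (fun k => f (xs k)) atTop (nhds (f x)) ∧
    Tendsto vs atTop (nhds v) ∧
    ∀ k, vs k ∈ frechetSubdiff f (xs k)}

/-- The horizon subdifferential of `f` at `x`. -/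
def horizonSubdiff (f : E → EReal) (x : E) : Set E :=
  {v | ∃ (xs vs : ℕ → E) (ts : ℕ → ℝ),
    Tendsto xs atTop (nhds x) ∧
    Tendsto (fun k => f (xs k)) atTop (nhds (f x)) ∧
    (∀ k, vs k ∈ frechetSubdiff f (xs k)) ∧
    (∀ k, 0 < ts k) ∧ Tendsto ts atTop (nhds 0) ∧
    Tendsto (fun k => ts k • vs k) atTop (nhds v)}

/-! Let `x k` minimize `f + k d_C² + ‖· - xb‖²` over a small closed ball around `xb`. Local
minimality of `xb` on `C` and lower semicontinuity of `f` force `x k → xb` and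
`f (x k) → f xb`. Near `x k` the penalty is majorized by the smooth function obtained by
replacing `d_C` with the distance to the projection `p k` of `x k` onto `C`; the two agree at
`x k`, so `-(2k (x k - p k) + 2 (x k - xb))` is a Fréchet subgradient of `f` at `x k`, while
`2k (x k - p k)` is normal to `C` at `p k`. If these subgradients stay bounded along a
subsequence, a limit point is a limiting subgradient; otherwise their normalizations converge
along a subsequence to a unit horizon subgradient. In both cases the graph of the normal cone
map is closed, so `-v` is normal to `C` at `xb`. -/

open Metric

theorem LowerSemicontinuousAt.tendsto_of_eventually_le {α β ι : Type*} [TopologicalSpace α]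
    [LinearOrder β] [TopologicalSpace β] [OrderTopology β] {f : α → β} {x : α} {l : Filter ι}
    {u : ι → α} (hf : LowerSemicontinuousAt f x) (hu : Tendsto u l (𝓝 x))
    (hle : ∀ᶠ i in l, f (u i) ≤ f x) : Tendsto (fun i => f (u i)) l (𝓝 (f x)) :=
  tendsto_order.2
    ⟨fun _ ha => hu.eventually (hf _ ha), fun _ ha => hle.mono fun _ hi => hi.trans_lt ha⟩

theorem IsCompact.exists_forall_coe_le_of_lowerSemicontinuousOn {α : Type*} [TopologicalSpace α]
    {f : α → EReal} {B : Set α} (hB : IsCompact B) (hf : LowerSemicontinuousOn f B)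
    (hbot : ∀ y ∈ B, f y ≠ ⊥) : ∃ m : ℝ, ∀ y ∈ B, (m : EReal) ≤ f y := by
  rcases B.eq_empty_or_nonempty with rfl | hne
  · exact ⟨0, by simp⟩
  obtain ⟨z, hz, hmin⟩ := hf.exists_isMinOn hne hB
  exact ⟨(f z).toReal, fun y hy => (EReal.coe_toReal_le (hbot z hz)).trans (hmin hy)⟩

theorem LowerSemicontinuous.add_coe {α : Type*} [TopologicalSpace α] {f : α → EReal}
    {g : α → ℝ} (hf : LowerSemicontinuous f) (hg : Continuous g) :
    LowerSemicontinuous fun x => f x + g x :=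
  hf.add' (continuous_coe_real_ereal.comp hg).lowerSemicontinuous fun _ =>
    EReal.continuousAt_add (.inr (EReal.coe_ne_bot _)) (.inr (EReal.coe_ne_top _))

def normalCone (C : Set E) (x : E) : Set E :=
  {w | ∀ y ∈ C, ⟪w, y - x⟫ ≤ 0}

theorem smul_mem_normalCone {C : Set E} {x w : E} {t : ℝ} (ht : 0 ≤ t)
    (hw : w ∈ normalCone C x) : t • w ∈ normalCone C x := fun y hy => by
  rw [real_inner_smul_left]
  exact mul_nonpos_of_nonneg_of_nonpos ht (hw y hy)

theorem isClosed_setOf_mem_normalCone (C : Set E) :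
    IsClosed {q : E × E | q.2 ∈ normalCone C q.1} := by
  have h : {q : E × E | q.2 ∈ normalCone C q.1} = ⋂ y ∈ C, {q | ⟪q.2, y - q.1⟫ ≤ 0} := by
    ext
    simp [normalCone]
  rw [h]
  exact isClosed_biInter fun y _ => isClosed_le (by fun_prop) continuous_const

theorem exists_norm_sub_eq_infDist_mem_normalCone {C : Set E} (hC : IsComplete C)
    (hCconv : Convex ℝ C) (hne : C.Nonempty) (x : E) :
    ∃ p ∈ C, ‖x - p‖ = infDist x C ∧ x - p ∈ normalCone C p := by
  obtain ⟨p, hp, hpx⟩ := exists_norm_eq_iInf_of_complete_convex hne hC hCconv x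
  have hinf : infDist x C = ⨅ w : C, ‖x - w‖ := by
    simp only [infDist_eq_iInf, dist_eq_norm]
  exact ⟨p, hp, hpx.trans hinf.symm, (norm_eq_iInf_iff_real_inner_le_zero hCconv hp).1 hpx⟩

theorem sq_infDist_le_of_norm_sub_eq_infDist {C : Set E} {x p : E} (hp : p ∈ C)
    (hxp : ‖x - p‖ = infDist x C) (y : E) :
    infDist y C ^ 2 ≤ infDist x C ^ 2 + 2 * ⟪x - p, y - x⟫ + ‖y - x‖ ^ 2 := by
  have h : infDist y C ≤ ‖(x - p) + (y - x)‖ := by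
    simpa [dist_eq_norm] using infDist_le_dist_of_mem (x := y) hp
  rw [← hxp, ← norm_add_sq_real]
  exact pow_le_pow_left₀ infDist_nonneg h 2

theorem neg_mem_frechetSubdiff_of_isLocalMin_add {f : E → EReal} {g : E → ℝ} {x u : E} {c : ℝ}
    (hmin : IsLocalMin (fun y => f y + g y) x)
    (hg : ∀ y, g y ≤ g x + ⟪u, y - x⟫ + c * ‖y - x‖ ^ 2) : -u ∈ frechetSubdiff f x := by
  intro ε hε
  have hsmall : ∀ᶠ y in 𝓝 x, c * ‖y - x‖ ≤ ε :=
    (Continuous.tendsto' (by fun_prop) x 0 (by simp)).eventually (ge_mem_nhds hε)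
  filter_upwards [hmin, hsmall] with y hy hcy
  set s := g x + ⟪u, y - x⟫ + ε * ‖y - x‖
  have hgy : g y ≤ s := by
    have := mul_le_mul_of_nonneg_right hcy (norm_nonneg (y - x))
    linarith [hg y]
  rw [← (EReal.addLECancellable_coe s).add_le_add_iff_right]
  calc f x + ((⟪-u, y - x⟫ - ε * ‖y - x‖ : ℝ) : EReal) + s = f x + g x := by
        rw [add_assoc, ← EReal.coe_add, inner_neg_left]
        congr 2
        ring
    _ ≤ f y + g y := hy
    _ ≤ f y + s := by gcongr

theorem mul_sq_infDist_add_sq_dist_le {C : Set E} {t : ℝ} (ht : 0 ≤ t) {x p : E} (hp : p ∈ C)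
    (hxp : ‖x - p‖ = infDist x C) (xb y : E) :
    t * infDist y C ^ 2 + dist y xb ^ 2 ≤ t * infDist x C ^ 2 + dist x xb ^ 2
      + ⟪(2 * t) • (x - p) + (2 : ℝ) • (x - xb), y - x⟫ + (t + 1) * ‖y - x‖ ^ 2 := by
  have hC := mul_le_mul_of_nonneg_left (sq_infDist_le_of_norm_sub_eq_infDist hp hxp y) ht
  have hxb : dist y xb ^ 2 = dist x xb ^ 2 + 2 * ⟪x - xb, y - x⟫ + ‖y - x‖ ^ 2 := by
    rw [dist_eq_norm, dist_eq_norm, ← norm_add_sq_real, sub_add_sub_cancel']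
  rw [inner_add_left, real_inner_smul_left, real_inner_smul_left, hxb]
  linarith

theorem tendsto_of_add_penalty_le {α : Type*} [MetricSpace α] {f : α → EReal} {P : α → ℝ}
    {B : Set α} {xb : α} {x : ℕ → α} (hf : LowerSemicontinuous f) (hbot : ∀ y, f y ≠ ⊥)
    (hfxb : f xb ≠ ⊤) (hP : Continuous P) (hP0 : ∀ y, 0 ≤ P y) (hB : IsCompact B)
    (hmin : ∀ y ∈ B, P y = 0 → f xb ≤ f y) (hxB : ∀ k, x k ∈ B)
    (hle : ∀ k : ℕ, f (x k) + ((k * P (x k) + dist (x k) xb ^ 2 : ℝ) : EReal) ≤ f xb) :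
    Tendsto x atTop (𝓝 xb) ∧ Tendsto (fun k => f (x k)) atTop (𝓝 (f xb)) := by
  obtain ⟨m, hm⟩ :=
    hB.exists_forall_coe_le_of_lowerSemicontinuousOn (hf.lowerSemicontinuousOn B) fun y _ => hbot y
  obtain ⟨fb, hfb⟩ : ∃ fb : ℝ, f xb = fb := ⟨_, (EReal.coe_toReal hfxb (hbot xb)).symm⟩
  have hbound : ∀ k : ℕ, k * P (x k) ≤ fb - m := fun k => by
    have h := (add_le_add_left (hm (x k) (hxB k)) _).trans (hle k)
    rw [hfb, ← EReal.coe_add, EReal.coe_le_coe_iff] at h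
    nlinarith [sq_nonneg (dist (x k) xb)]
  have hPx : Tendsto (fun k => P (x k)) atTop (𝓝 0) := by
    refine squeeze_zero' (.of_forall fun k => hP0 _) ?_
      (tendsto_const_div_atTop_nhds_zero_nat (fb - m))
    filter_upwards [eventually_gt_atTop 0] with k hk
    rw [le_div_iff₀ (by exact_mod_cast hk), mul_comm]
    exact hbound k
  have hdist : ∀ k, f (x k) + ((dist (x k) xb ^ 2 : ℝ) : EReal) ≤ f xb := fun k => by
    refine le_trans ?_ (hle k)
    gcongr
    exact le_add_of_nonneg_left (mul_nonneg k.cast_nonneg (hP0 _))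
  have hx : Tendsto x atTop (𝓝 xb) := by
    refine hB.tendsto_nhds_of_unique_mapClusterPt (.of_forall hxB) fun y hyB hy => ?_
    have hPy : P y = 0 := eq_of_nhds_neBot (ClusterPt.mono (hy.tendsto_comp (hP.tendsto y)) hPx)
    have hψ : LowerSemicontinuous fun z => f z + ((dist z xb ^ 2 : ℝ) : EReal) :=
      hf.add_coe (by fun_prop)
    have hψy : f y + ((dist y xb ^ 2 : ℝ) : EReal) ≤ f xb :=
      (hψ.isClosed_preimage (f xb)).mem_of_mapClusterPt hy (.of_forall hdist)
    have hfy : f y ≠ ⊤ :=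
      ne_top_of_le_ne_top hfxb ((le_add_of_nonneg_right (by positivity)).trans hψy)
    obtain ⟨a, ha⟩ : ∃ a : ℝ, f y = a := ⟨_, (EReal.coe_toReal hfy (hbot y)).symm⟩
    have hy := hψy.trans (hmin y hyB hPy)
    rw [ha, ← EReal.coe_add, EReal.coe_le_coe_iff] at hy
    exact dist_le_zero.1 (by nlinarith [dist_nonneg (x := y) (y := xb)])
  refine ⟨hx, LowerSemicontinuousAt.tendsto_of_eventually_le (hf xb) hx (.of_forall fun k => ?_)⟩
  exact le_trans (le_add_of_nonneg_right (by positivity)) (hdist k)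

section Subsequences

variable [ProperSpace E] {f : E → EReal} {x : E} {xs vs : ℕ → E}

theorem exists_subseq_tendsto_mem_limitingSubdiff (hxs : Tendsto xs atTop (𝓝 x))
    (hfxs : Tendsto (fun k => f (xs k)) atTop (𝓝 (f x)))
    (hvs : ∀ᶠ k in atTop, vs k ∈ frechetSubdiff f (xs k)) {R : ℝ}
    (hR : ∃ᶠ k in atTop, ‖vs k‖ ≤ R) :
    ∃ φ : ℕ → ℕ, StrictMono φ ∧ ∃ v ∈ limitingSubdiff f x, Tendsto (vs ∘ φ) atTop (𝓝 v) := by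
  obtain ⟨ψ, hψ, hψR⟩ := extraction_of_frequently_atTop (hR.and_eventually hvs)
  obtain ⟨v, -, τ, hτ, hv⟩ := (isCompact_closedBall (0 : E) R).tendsto_subseq
    fun j => mem_closedBall_zero_iff.2 (hψR j).1
  have hφ := (hψ.comp hτ).tendsto_atTop
  exact ⟨ψ ∘ τ, hψ.comp hτ, v, ⟨xs ∘ ψ ∘ τ, vs ∘ ψ ∘ τ, hxs.comp hφ, hfxs.comp hφ, hv,
    fun j => (hψR (τ j)).2⟩, hv⟩

theorem exists_subseq_tendsto_mem_horizonSubdiff (hxs : Tendsto xs atTop (𝓝 x))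
    (hfxs : Tendsto (fun k => f (xs k)) atTop (𝓝 (f x)))
    (hvs : ∀ᶠ k in atTop, vs k ∈ frechetSubdiff f (xs k))
    (hvs_top : Tendsto (fun k => ‖vs k‖) atTop atTop) :
    ∃ φ : ℕ → ℕ, StrictMono φ ∧ (∀ j, 1 ≤ ‖vs (φ j)‖) ∧ ∃ v ∈ horizonSubdiff f x, ‖v‖ = 1 ∧
      Tendsto (fun j => ‖vs (φ j)‖⁻¹ • vs (φ j)) atTop (𝓝 v) := by
  obtain ⟨ψ, hψ, hψv⟩ :=
    extraction_of_eventually_atTop ((hvs_top.eventually_ge_atTop 1).and hvs)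
  have hpos : ∀ j, 0 < ‖vs (ψ j)‖ := fun j => one_pos.trans_le (hψv j).1
  obtain ⟨v, hv1, τ, hτ, hv⟩ := (isCompact_sphere (0 : E) 1).tendsto_subseq
    (x := fun j => ‖vs (ψ j)‖⁻¹ • vs (ψ j)) fun j => by
    rw [mem_sphere_zero_iff_norm, norm_smul, norm_inv, norm_norm, inv_mul_cancel₀ (hpos j).ne']
  have hφ := (hψ.comp hτ).tendsto_atTop
  refine ⟨ψ ∘ τ, hψ.comp hτ, fun j => (hψv (τ j)).1, v,
    ⟨xs ∘ ψ ∘ τ, vs ∘ ψ ∘ τ, fun j => ‖vs (ψ (τ j))‖⁻¹, hxs.comp hφ, hfxs.comp hφ,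
      fun j => (hψv (τ j)).2, fun j => inv_pos.2 (hpos (τ j)),
      tendsto_inv_atTop_zero.comp (hvs_top.comp hφ), hv⟩,
    mem_sphere_zero_iff_norm.1 hv1, hv⟩

theorem exists_subseq_smul_tendsto_mem_limitingSubdiff_or_horizonSubdiff
    (hxs : Tendsto xs atTop (𝓝 x)) (hfxs : Tendsto (fun k => f (xs k)) atTop (𝓝 (f x)))
    (hvs : ∀ᶠ k in atTop, vs k ∈ frechetSubdiff f (xs k)) :
    ∃ (φ : ℕ → ℕ) (t : ℕ → ℝ) (v : E), StrictMono φ ∧ (∀ j, t j ∈ Ioc 0 1) ∧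
      Tendsto (fun j => t j • vs (φ j)) atTop (𝓝 v) ∧
      (v ∈ limitingSubdiff f x ∨ v ∈ horizonSubdiff f x ∧ ‖v‖ = 1) := by
  by_cases hbdd : ∃ R, ∃ᶠ k in atTop, ‖vs k‖ ≤ R
  · obtain ⟨R, hR⟩ := hbdd
    obtain ⟨φ, hφ, v, hv, hvlim⟩ := exists_subseq_tendsto_mem_limitingSubdiff hxs hfxs hvs hR
    exact ⟨φ, 1, v, hφ, fun _ => ⟨one_pos, le_rfl⟩, by simpa [Function.comp_def] using hvlim,
      .inl hv⟩
  · push Not at hbdd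
    have hvs_top : Tendsto (fun k => ‖vs k‖) atTop atTop :=
      tendsto_atTop.2 fun b => (hbdd b).mono fun _ h => h.le
    obtain ⟨φ, hφ, hge, v, hv, hv1, hvlim⟩ :=
      exists_subseq_tendsto_mem_horizonSubdiff hxs hfxs hvs hvs_top
    exact ⟨φ, fun j => ‖vs (φ j)‖⁻¹, v, hφ,
      fun j => ⟨inv_pos.2 (one_pos.trans_le (hge j)), inv_le_one_of_one_le₀ (hge j)⟩, hvlim,
      .inr ⟨hv, hv1⟩⟩

end Subsequences

theorem exists_seq_neg_add_mem_frechetSubdiff_of_isLocalMinOn [ProperSpace E] {f : E → EReal}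
    (hbot : ∀ y, f y ≠ ⊥) (hf : LowerSemicontinuous f) {C : Set E} (hCclosed : IsClosed C)
    (hCconv : Convex ℝ C) {xb : E} (hxbC : xb ∈ C) (hfxb : f xb ≠ ⊤)
    (hmin : IsLocalMinOn f C xb) :
    ∃ x p w e : ℕ → E, Tendsto x atTop (𝓝 xb) ∧ Tendsto (fun k => f (x k)) atTop (𝓝 (f xb)) ∧
      Tendsto p atTop (𝓝 xb) ∧ (∀ k, w k ∈ normalCone C (p k)) ∧ Tendsto e atTop (𝓝 0) ∧
      ∀ᶠ k in atTop, -(w k + e k) ∈ frechetSubdiff f (x k) := by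
  obtain ⟨U, hU, hUmin⟩ := mem_nhdsWithin_iff_exists_mem_nhds_inter.1 hmin
  obtain ⟨r, hr, hrU⟩ := nhds_basis_closedBall.mem_iff.1 hU
  have hxbB : xb ∈ closedBall xb r := mem_closedBall_self hr.le
  set g : ℕ → E → ℝ := fun k y => k * infDist y C ^ 2 + dist y xb ^ 2
  choose x hxB hxmin using fun k => LowerSemicontinuousOn.exists_isMinOn ⟨xb, hxbB⟩
    (isCompact_closedBall xb r) ((hf.add_coe (g := g k) (by fun_prop)).lowerSemicontinuousOn _)
  have hPmin : ∀ y ∈ closedBall xb r, infDist y C ^ 2 = 0 → f xb ≤ f y := fun y hy hPy =>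
    hUmin ⟨hrU hy,
      (hCclosed.mem_iff_infDist_zero ⟨xb, hxbC⟩).2 (pow_eq_zero_iff two_ne_zero |>.1 hPy)⟩
  obtain ⟨hx, hfx⟩ := tendsto_of_add_penalty_le hf hbot hfxb (by fun_prop)
    (fun _ => sq_nonneg _) (isCompact_closedBall xb r) hPmin hxB
    fun k => by simpa [g, infDist_zero_of_mem hxbC] using hxmin k hxbB
  choose p hpC hpx hpN using fun k =>
    exists_norm_sub_eq_infDist_mem_normalCone hCclosed.isComplete hCconv ⟨xb, hxbC⟩ (x k)
  have hp : Tendsto p atTop (𝓝 xb) := by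
    have hd : Tendsto (fun k => x k - p k) atTop (𝓝 0) := by
      rw [tendsto_zero_iff_norm_tendsto_zero]
      simp_rw [hpx]
      exact ((continuous_infDist_pt C).tendsto' xb 0 (infDist_zero_of_mem hxbC)).comp hx
    simpa using hx.sub hd
  refine ⟨x, p, fun k => (2 * (k : ℝ)) • (x k - p k), fun k => (2 : ℝ) • (x k - xb),
    hx, hfx, hp, fun k => smul_mem_normalCone (by positivity) (hpN k),
    by simpa using (hx.sub_const xb).const_smul (2 : ℝ), ?_⟩
  filter_upwards [hx (ball_mem_nhds xb hr)] with k hk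
  exact neg_mem_frechetSubdiff_of_isLocalMin_add ((hxmin k).isLocalMin
    (mem_of_superset (isOpen_ball.mem_nhds hk) ball_subset_closedBall))
    (mul_sq_infDist_add_sq_dist_le k.cast_nonneg (hpC k) (hpx k) xb)

theorem exists_mem_limitingSubdiff_or_horizonSubdiff_of_tendsto [ProperSpace E]
    {f : E → EReal} {C : Set E} {xb : E} {x p w e : ℕ → E} (hx : Tendsto x atTop (𝓝 xb))
    (hfx : Tendsto (fun k => f (x k)) atTop (𝓝 (f xb))) (hp : Tendsto p atTop (𝓝 xb))
    (hwN : ∀ k, w k ∈ normalCone C (p k)) (he : Tendsto e atTop (𝓝 0))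
    (hfre : ∀ᶠ k in atTop, -(w k + e k) ∈ frechetSubdiff f (x k)) :
    (∃ v ∈ limitingSubdiff f xb, -v ∈ normalCone C xb) ∨
      ∃ v ∈ horizonSubdiff f xb, ‖v‖ = 1 ∧ -v ∈ normalCone C xb := by
  obtain ⟨φ, t, v, hφ, ht, htv, hv⟩ :=
    exists_subseq_smul_tendsto_mem_limitingSubdiff_or_horizonSubdiff hx hfx hfre
  have hte : Tendsto (fun j => t j • e (φ j)) atTop (𝓝 0) :=
    (isBoundedUnder_of ⟨1, fun j => by simpa [abs_of_pos (ht j).1] using (ht j).2⟩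
      ).smul_tendsto_zero (he.comp hφ.tendsto_atTop)
  have htw : Tendsto (fun j => t j • w (φ j)) atTop (𝓝 (-v)) := by
    refine (sub_zero (-v) ▸ htv.neg.sub hte).congr fun j => ?_
    simp only [smul_neg, neg_neg, smul_add]
    abel
  have hN : -v ∈ normalCone C xb :=
    (isClosed_setOf_mem_normalCone C).mem_of_tendsto
      ((hp.comp hφ.tendsto_atTop).prodMk_nhds htw)
      (.of_forall fun j => smul_mem_normalCone (ht j).1.le (hwN _))
  rcases hv with hv | ⟨hv, hv1⟩
  exacts [.inl ⟨v, hv, hN⟩, .inr ⟨v, hv, hv1, hN⟩]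

theorem fritz_john_via_normal_cone
    [FiniteDimensional ℝ E]
    (f : E → EReal) (hproper : ∀ x, f x ≠ ⊥) (hlsc : LowerSemicontinuous f)
    (C : Set E) (hCclosed : IsClosed C) (hCconv : Convex ℝ C)
    (xb : E) (hxbC : xb ∈ C) (hdom : f xb ≠ ⊤)
    (hmin : ∃ U ∈ nhds xb, ∀ y ∈ C ∩ U, f xb ≤ f y) :
    (∃ v ∈ limitingSubdiff f xb, ∀ y ∈ C, ⟪-v, y - xb⟫ ≤ 0) ∨
    (∃ v ∈ horizonSubdiff f xb, ‖v‖ = 1 ∧ ∀ y ∈ C, ⟪-v, y - xb⟫ ≤ 0) := by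
  have hloc : IsLocalMinOn f C xb := by
    obtain ⟨U, hU, hUmin⟩ := hmin
    exact mem_nhdsWithin_iff_exists_mem_nhds_inter.2 ⟨U, hU, fun y hy => hUmin y ⟨hy.2, hy.1⟩⟩
  obtain ⟨x, p, w, e, hx, hfx, hp, hwN, he, hfre⟩ :=
    exists_seq_neg_add_mem_frechetSubdiff_of_isLocalMinOn hproper hlsc hCclosed hCconv hxbC hdom
      hloc
  exact exists_mem_limitingSubdiff_or_horizonSubdiff_of_tendsto hx hfx hp hwN he hfre
end

section
/- Let h : ℝⁿ → ℝ ∪ {+∞}, x̄ ∈ dom h, K ⊆ ℝⁿ, β > 0, γ ≥ 0. For every d in the tangent cone T(K, x̄), every λ ∈ [0,1], and every w ∈ ∂^{K}_{β,γ} h(x̄), one has λ⟨w, d⟩ ≤ β · max{h^{H+}(x̄; d), 0}, where h^{H+}(x̄; d) := limsup_{t→0⁺, d'→d} (h(x̄ + t d') − h(x̄))/t is the upper Hadamard directional derivative. -/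
open RealInnerProductSpace Set Filter Topology

variable {E : Type*} [NormedAddCommGroup E] [InnerProductSpace ℝ E]

/-- The (Bouligand) tangent cone `T(K, x)`. -/
def tangentConeP (K : Set E) (x : E) : Set E :=
  {d | ∃ (t : ℕ → ℝ) (ds : ℕ → E),
    (∀ n, 0 < t n) ∧ Tendsto t atTop (nhds 0) ∧
    Tendsto ds atTop (nhds d) ∧ ∀ n, x + t n • ds n ∈ K}

/-- The upper Hadamard directional derivative of `h` at `x` in direction `d`. -/
noncomputable def hadamardDeriv (h : E → EReal) (x : E) (d : E) : EReal :=
  Filter.limsup (fun p : ℝ × E => ((p.1⁻¹ : ℝ) : EReal) * (h (x + p.1 • p.2) - h x))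
    ((nhdsWithin (0:ℝ) (Ioi 0)) ×ˢ nhds d)

/-!
Take a tangent direction `d`, realized by `x̄ + tₙ dₙ ∈ K` with `tₙ ↓ 0` and `dₙ → d`, and test the
strong subdifferential inequality at `y = x̄ + tₙ dₙ`. Its right-hand side is
`tₙ rₙ` with `rₙ = (λ/β)⟨w, dₙ⟩ + O(tₙ)`, and according to which of `h y`, `h x̄` is larger it gives
either `rₙ ≤ 0` or `rₙ ≤ (h y − h x̄)/tₙ`. Hence `rₙ` is bounded by the positive part of the
Hadamard difference quotient at `(tₙ, dₙ)`, and passing to the limsup gives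
`(λ/β)⟨w, d⟩ ≤ max (h^{H+}(x̄; d)) 0`.
-/

theorem EReal.coe_le_max_inv_mul_sub_of_add_le {a b : EReal} (ha : a ≠ ⊥) (ha' : a ≠ ⊤)
    {t r : ℝ} (ht : 0 < t) (hab : a + ((t * r : ℝ) : EReal) ≤ max b a) :
    (r : EReal) ≤ max (((t⁻¹ : ℝ) : EReal) * (b - a)) 0 := by
  lift a to ℝ using ⟨ha', ha⟩
  rcases le_total b a with hba | hab'
  · rw [max_eq_right hba, ← EReal.coe_add, EReal.coe_le_coe_iff] at hab
    have : r ≤ 0 := nonpos_of_mul_nonpos_right (by linarith) ht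
    exact le_max_of_le_right (by exact_mod_cast this)
  · rw [max_eq_left hab'] at hab
    have hsub : ((t * r : ℝ) : EReal) ≤ b - a := by
      rwa [EReal.le_sub_iff_add_le (.inl (EReal.coe_ne_bot a)) (.inl (EReal.coe_ne_top a)),
        add_comm]
    have hinv : (0 : EReal) ≤ ((t⁻¹ : ℝ) : EReal) := by exact_mod_cast (inv_pos.2 ht).le
    calc (r : EReal) = ((t⁻¹ : ℝ) : EReal) * ((t * r : ℝ) : EReal) := by
          rw [← EReal.coe_mul, inv_mul_cancel_left₀ ht.ne']
      _ ≤ ((t⁻¹ : ℝ) : EReal) * (b - a) := mul_le_mul_of_nonneg_left hsub hinv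
      _ ≤ _ := le_max_left _ _

theorem tendsto_prodMk_nhdsGT_zero {F : Type*} [TopologicalSpace F] {t : ℕ → ℝ} {ds : ℕ → F}
    {d : F} (htpos : ∀ n, 0 < t n) (ht : Tendsto t atTop (𝓝 0)) (hds : Tendsto ds atTop (𝓝 d)) :
    Tendsto (fun n => (t n, ds n)) atTop (𝓝[>] 0 ×ˢ 𝓝 d) :=
  (tendsto_nhdsWithin_of_tendsto_nhds_of_eventually_within _ ht (.of_forall htpos)).prodMk hds

theorem le_limsup_of_tendsto_of_le {α : Type*} {f : α → EReal} {F : Filter α} {u : ℕ → α}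
    (hu : Tendsto u atTop F) {g : ℕ → EReal} {L : EReal} (hg : Tendsto g atTop (𝓝 L))
    (hle : ∀ n, g n ≤ f (u n)) : L ≤ limsup f F :=
  calc L = limsup g atTop := hg.limsup_eq.symm
    _ ≤ limsup (f ∘ u) atTop := limsup_le_limsup (.of_forall hle)
    _ ≤ limsup f F := limsup_le_limsup_of_le hu

theorem coe_le_max_hadamardDeriv_zero {h : E → EReal} {x d : E} {t : ℕ → ℝ} {ds : ℕ → E}
    (hu : Tendsto (fun n => (t n, ds n)) atTop (𝓝[>] 0 ×ˢ 𝓝 d)) {r : ℕ → ℝ} {L : ℝ}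
    (hr : Tendsto r atTop (𝓝 L))
    (hle : ∀ n, (r n : EReal) ≤ max (((t n)⁻¹ : ℝ) * (h (x + t n • ds n) - h x)) 0) :
    (L : EReal) ≤ max (hadamardDeriv h x d) 0 := by
  have := le_limsup_of_tendsto_of_le (f := fun p : ℝ × E =>
    max (((p.1⁻¹ : ℝ) : EReal) * (h (x + p.1 • p.2) - h x)) 0) hu (EReal.tendsto_coe.2 hr) hle
  rwa [limsup_max, limsup_const] at this

theorem add_le_max_of_mem_strongSubdiff {h : E → EReal} {K : Set E} {β γ : ℝ} {x w v : E}
    (hw : w ∈ strongSubdiff h K β γ x) {l t : ℝ} (hl : l ∈ Icc (0 : ℝ) 1)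
    (hK : x + t • v ∈ K) :
    h x + ((t * ((l / β) * ⟪w, v⟫
        + (l / 2) * (γ - l / β - l * γ) * t * ‖v‖ ^ 2) : ℝ) : EReal)
      ≤ max (h (x + t • v)) (h x) := by
  have key := hw (x + t • v) hK l hl
  rwa [add_sub_cancel_left, real_inner_smul_right, norm_smul, mul_pow, Real.norm_eq_abs,
    sq_abs, show (l / β) * (t * ⟪w, v⟫) + (l / 2) * (γ - l / β - l * γ) * (t ^ 2 * ‖v‖ ^ 2)
      = t * ((l / β) * ⟪w, v⟫ + (l / 2) * (γ - l / β - l * γ) * t * ‖v‖ ^ 2) by ring] at key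

theorem strongSubdiff_le_hadamard_general
    (h : E → EReal) (hproper : ∀ x, h x ≠ ⊥)
    (K : Set E) (β γ : ℝ) (hβ : 0 < β)
    (xb : E) (hdom : h xb ≠ ⊤)
    (d : E) (hd : d ∈ tangentConeP K xb) :
    ∀ l ∈ Icc (0:ℝ) 1, ∀ w ∈ strongSubdiff h K β γ xb,
      ((l * ⟪w, d⟫ : ℝ) : EReal) ≤ ((β : ℝ) : EReal) * max (hadamardDeriv h xb d) 0 := by
  obtain ⟨t, ds, htpos, ht, hds, hK⟩ := hd
  intro l hl w hw
  set c := (l / 2) * (γ - l / β - l * γ)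
  have hr : Tendsto (fun n => (l / β) * ⟪w, ds n⟫ + c * t n * ‖ds n‖ ^ 2) atTop
      (𝓝 ((l / β) * ⟪w, d⟫)) := by
    have hinner : Tendsto (fun n => ⟪w, ds n⟫) atTop (𝓝 ⟪w, d⟫) :=
      ((continuous_const.inner continuous_id).tendsto d).comp hds
    have hnorm : Tendsto (fun n => ‖ds n‖ ^ 2) atTop (𝓝 (‖d‖ ^ 2)) :=
      ((continuous_norm.pow 2).tendsto d).comp hds
    simpa using (hinner.const_mul (l / β)).add ((ht.const_mul c).mul hnorm)
  have hle : (((l / β) * ⟪w, d⟫ : ℝ) : EReal) ≤ max (hadamardDeriv h xb d) 0 :=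
    coe_le_max_hadamardDeriv_zero (tendsto_prodMk_nhdsGT_zero htpos ht hds) hr fun n =>
      EReal.coe_le_max_inv_mul_sub_of_add_le (hproper xb) hdom (htpos n)
        (add_le_max_of_mem_strongSubdiff hw hl (hK n))
  calc ((l * ⟪w, d⟫ : ℝ) : EReal) = (β : EReal) * (((l / β) * ⟪w, d⟫ : ℝ) : EReal) := by
        rw [← EReal.coe_mul]; congr 1; field_simp
    _ ≤ (β : EReal) * max (hadamardDeriv h xb d) 0 :=
        mul_le_mul_of_nonneg_left hle (by exact_mod_cast hβ.le)

theorem strongSubdiff_le_hadamard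
    (h : E → EReal) (hproper : ∀ x, h x ≠ ⊥)
    (K : Set E) (β γ : ℝ) (hβ : 0 < β) (hγ : 0 ≤ γ)
    (xb : E) (hdom : h xb ≠ ⊤)
    (d : E) (hd : d ∈ tangentConeP K xb) :
    ∀ l ∈ Icc (0:ℝ) 1, ∀ w ∈ strongSubdiff h K β γ xb,
      ((l * ⟪w, d⟫ : ℝ) : EReal) ≤ ((β : ℝ) : EReal) * max (hadamardDeriv h xb d) 0 :=
  strongSubdiff_le_hadamard_general h hproper K β γ hβ xb hdom d hd
end

section
/- Sufficient optimality from strong-subdifferential KKT: let x̄ ∈ Ω with Ω ⊂ ∩_{j∈I(x̄)} K_j, suppose 0 = γ₀v + Σ_{j: μ_j>0} μ_j v_j where γ₀ > 0, μ_j ≥ 0, γ₀ + Σ μ_j = 1, v ∈ ℝⁿ, and each v_j satisfies ⟨v_j, y − x̄⟩ ≤ −(β_jγ_j/2)‖y − x̄‖² for all y ∈ S_{g_j}(x̄) ∩ K_j. Then with μ̄ := (1/2)Σ_{j: μ_j>0} β_jγ_jμ_j, one has (μ̄/γ₀)‖y − x̄‖² ≤ ⟨v, y − x̄⟩ for all y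 ∈ Ω. -/
open RealInnerProductSpace Set Filter Topology

theorem kkt_sufficient_strong_growth
    {E : Type*} [NormedAddCommGroup E] [InnerProductSpace ℝ E]
    {I : Type*} [Fintype I] (g : I → E → EReal) (xb : E)
    [DecidablePred fun j : I => g j xb = 0]
    (β γ : I → ℝ) (hβ : ∀ j, 0 < β j) (hγ : ∀ j, 0 ≤ γ j)
    (Kj : I → Set E)
    (hxb : ∀ j, g j xb ≤ 0)
    (hK : {x | ∀ j, g j x ≤ 0} ⊆
      ⋂ j ∈ Finset.univ.filter (fun j : I => g j xb = 0), Kj j)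
    (γ₀ : ℝ) (hγ₀ : 0 < γ₀) (μ : I → ℝ) (hμ : ∀ j, 0 ≤ μ j)
    (hsum1 : γ₀ + ∑ j ∈ Finset.univ.filter (fun j : I => g j xb = 0), μ j = 1)
    (v : E) (vj : I → E)
    (hvj : ∀ j ∈ Finset.univ.filter (fun j : I => g j xb = 0), 0 < μ j →
      ∀ y : E, g j y ≤ g j xb → y ∈ Kj j →
        ⟪vj j, y - xb⟫ ≤ -(β j * γ j / 2) * ‖y - xb‖ ^ 2)
    (heq : (0 : E) = γ₀ • v +
      ∑ j ∈ (Finset.univ.filter (fun j : I => g j xb = 0)).filter (fun j => 0 < μ j),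
        μ j • vj j) :
    ∀ y ∈ {x : E | ∀ j, g j x ≤ 0},
      (((1:ℝ)/2) * ∑ j ∈ (Finset.univ.filter (fun j : I => g j xb = 0)).filter
          (fun j => 0 < μ j), β j * γ j * μ j) / γ₀ * ‖y - xb‖ ^ 2
        ≤ ⟪v, y - xb⟫ := by
  intro y hy
  set A := Finset.univ.filter (fun j : I => g j xb = 0) with hA
  set B := A.filter (fun j => 0 < μ j) with hB
  -- take inner product of heq with y - xb
  have hinner : 0 = γ₀ * ⟪v, y - xb⟫ + ∑ j ∈ B, μ j * ⟪vj j, y - xb⟫ := by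
    have := congrArg (fun w => ⟪w, y - xb⟫) heq
    simpa [inner_add_left, inner_smul_left, sum_inner] using this
  have hyK : ∀ j ∈ A, y ∈ Kj j := by
    intro j hj
    have := hK hy
    simp only [Set.mem_iInter] at this
    exact this j hj
  have hterm : ∀ j ∈ B, β j * γ j * μ j / 2 * ‖y - xb‖ ^ 2 ≤ -(μ j * ⟪vj j, y - xb⟫) := by
    intro j hj
    have hjA : j ∈ A := Finset.mem_filter.1 hj |>.1
    have hjμ : 0 < μ j := (Finset.mem_filter.1 hj).2
    have hgy : g j y ≤ g j xb := by
      have hact : g j xb = 0 := (Finset.mem_filter.1 hjA).2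
      rw [hact]; exact hy j
    have h := hvj j hjA hjμ y hgy (hyK j hjA)
    have := mul_le_mul_of_nonneg_left h (le_of_lt hjμ)
    nlinarith [this]
  have hsumle : (∑ j ∈ B, β j * γ j * μ j / 2 * ‖y - xb‖ ^ 2)
      ≤ ∑ j ∈ B, -(μ j * ⟪vj j, y - xb⟫) := Finset.sum_le_sum hterm
  have hsumeq : (∑ j ∈ B, β j * γ j * μ j / 2 * ‖y - xb‖ ^ 2)
      = ((1:ℝ)/2 * ∑ j ∈ B, β j * γ j * μ j) * ‖y - xb‖ ^ 2 := by
    rw [Finset.mul_sum, Finset.sum_mul]; exact Finset.sum_congr rfl fun j _ => by ring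
  have hneg : ∑ j ∈ B, -(μ j * ⟪vj j, y - xb⟫) = γ₀ * ⟪v, y - xb⟫ := by
    rw [Finset.sum_neg_distrib]; linarith [hinner]
  rw [div_mul_eq_mul_div, div_le_iff₀ hγ₀]
  calc (1:ℝ)/2 * (∑ j ∈ B, β j * γ j * μ j) * ‖y - xb‖ ^ 2
      = ((1:ℝ)/2 * ∑ j ∈ B, β j * γ j * μ j) * ‖y - xb‖ ^ 2 := by ring
    _ = ∑ j ∈ B, β j * γ j * μ j / 2 * ‖y - xb‖ ^ 2 := hsumeq.symm
    _ ≤ ∑ j ∈ B, -(μ j * ⟪vj j, y - xb⟫) := hsumle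
    _ = γ₀ * ⟪v, y - xb⟫ := hneg
    _ = ⟪v, y - xb⟫ * γ₀ := by ring
end

section
/- If h is strongly quasiconvex with modulus γ ≥ 0 on all of ℝⁿ, x̄ ∈ dom h, and the sublevel-set map y ↦ S_h(y) is inner semicontinuous at x̄ relative to dom h (i.e., S_h(x̄) ⊂ liminf_{y→x̄, y∈dom h} S_h(y)), then every limiting subgradient v ∈ ∂h(x̄) satisfies ⟨v, y − x̄⟩ ≤ −(γ/2)‖y − x̄‖² for all y ∈ S_h(x̄). -/
/-!
At a Fréchet subgradient `v` of `h` at `x`, compare the first-order lower estimate of `h` along the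
segment from `x` to a point `y` of the sublevel set with the upper estimate given by strong
quasiconvexity; dividing by the step length `l` and letting `l → 0` gives
`⟪v, y - x⟫ ≤ -(γ / 2) ‖y - x‖²`. For a limiting subgradient `v = lim vₖ`, `vₖ` Fréchet at `xₖ → x̄`,
inner semicontinuity of the sublevel map provides `yₖ → y` with `h yₖ ≤ h xₖ`; the inequality at
`(xₖ, yₖ, vₖ)` passes to the limit.
-/

open RealInnerProductSpace Set Filter Topology

variable {E : Type*} [NormedAddCommGroup E] [InnerProductSpace ℝ E]

theorem EReal.le_neg_of_add_le_sub {r : EReal} (hr : r ≠ ⊤) (hr' : r ≠ ⊥) {a b : ℝ}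
    (hab : r + a ≤ r - b) : a ≤ -b := by
  lift r to ℝ using ⟨hr, hr'⟩
  have hab' : r + a ≤ r - b := by exact_mod_cast hab
  linarith

def IsStronglyQuasiconvex (h : E → EReal) (γ : ℝ) : Prop :=
  ∀ x y : E, ∀ l ∈ Icc (0:ℝ) 1,
    h (l • y + (1 - l) • x) ≤
      max (h y) (h x) - ((l * (1 - l) * (γ / 2) * ‖x - y‖ ^ 2 : ℝ) : EReal)

namespace IsStronglyQuasiconvex

variable {h : E → EReal} {γ : ℝ} {x y v : E}

theorem eventually_inner_sub_le (hsqc : IsStronglyQuasiconvex h γ) (hx : h x ≠ ⊤) (hx' : h x ≠ ⊥)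
    (hv : v ∈ frechetSubdiff h x) (hy : h y ≤ h x) {ε : ℝ} (hε : 0 < ε) :
    ∀ᶠ l in 𝓝[>] (0 : ℝ),
      ⟪v, y - x⟫ - ε * ‖y - x‖ ≤ -((1 - l) * (γ / 2) * ‖y - x‖ ^ 2) := by
  have hseg : Tendsto (fun l : ℝ => l • y + (1 - l) • x) (𝓝[>] 0) (𝓝 x) := by
    refine tendsto_nhdsWithin_of_tendsto_nhds (Continuous.tendsto' ?_ _ _ (by simp))
    fun_prop
  filter_upwards [hseg.eventually (hv ε hε), Ioo_mem_nhdsGT one_pos] with l hfr hl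
  have hsub : l • y + (1 - l) • x - x = l • (y - x) := by module
  have hupper := hsqc x y l ⟨hl.1.le, hl.2.le⟩
  rw [max_eq_right hy] at hupper
  have hreal := EReal.le_neg_of_add_le_sub hx hx' (hfr.trans hupper)
  rw [hsub, inner_smul_right, norm_smul, Real.norm_of_nonneg hl.1.le, norm_sub_rev x y] at hreal
  have hmul : l * (⟪v, y - x⟫ - ε * ‖y - x‖) ≤ l * -((1 - l) * (γ / 2) * ‖y - x‖ ^ 2) := by
    linarith
  exact le_of_mul_le_mul_left hmul hl.1

theorem inner_le_of_mem_frechetSubdiff (hsqc : IsStronglyQuasiconvex h γ) (hx : h x ≠ ⊤)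
    (hx' : h x ≠ ⊥) (hv : v ∈ frechetSubdiff h x) (hy : h y ≤ h x) :
    ⟪v, y - x⟫ ≤ -(γ / 2) * ‖y - x‖ ^ 2 := by
  have hε : ∀ ε > 0, ⟪v, y - x⟫ ≤ -(γ / 2) * ‖y - x‖ ^ 2 + ε * ‖y - x‖ := fun ε hε => by
    have hlim : Tendsto (fun l : ℝ => -((1 - l) * (γ / 2) * ‖y - x‖ ^ 2)) (𝓝[>] 0)
        (𝓝 (-(γ / 2) * ‖y - x‖ ^ 2)) := by
      refine tendsto_nhdsWithin_of_tendsto_nhds (Continuous.tendsto' ?_ _ _ (by ring))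
      fun_prop
    linarith [ge_of_tendsto hlim (hsqc.eventually_inner_sub_le hx hx' hv hy hε)]
  have hlim : Tendsto (fun ε : ℝ => -(γ / 2) * ‖y - x‖ ^ 2 + ε * ‖y - x‖) (𝓝[>] 0)
      (𝓝 (-(γ / 2) * ‖y - x‖ ^ 2)) := by
    refine tendsto_nhdsWithin_of_tendsto_nhds (Continuous.tendsto' ?_ _ _ (by ring))
    fun_prop
  exact ge_of_tendsto hlim (eventually_nhdsWithin_of_forall hε)

end IsStronglyQuasiconvex

theorem limiting_subgradient_strong_sublevel_inequality_general
    (h : E → EReal) (hproper : ∀ x, h x ≠ ⊥)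
    (γ : ℝ)
    (hsqc : ∀ x y : E, ∀ l ∈ Icc (0:ℝ) 1,
      h (l • y + (1 - l) • x) ≤
        max (h y) (h x) - ((l * (1 - l) * (γ / 2) * ‖x - y‖ ^ 2 : ℝ) : EReal))
    (xb : E) (hdom : h xb ≠ ⊤)
    (hisc : ∀ z : E, h z ≤ h xb → ∀ xs : ℕ → E,
      (∀ k, h (xs k) ≠ ⊤) → Tendsto xs atTop (nhds xb) →
      ∃ ys : ℕ → E, Tendsto ys atTop (nhds z) ∧ ∀ k, h (ys k) ≤ h (xs k)) :
    ∀ v ∈ limitingSubdiff h xb, ∀ y : E, h y ≤ h xb →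
      ⟪v, y - xb⟫ ≤ -(γ / 2) * ‖y - xb‖ ^ 2 := by
  rintro v ⟨xs, vs, hxs, hhxs, hvs, hsub⟩ y hy
  -- replace the finitely many `xs k` outside `dom h` by `xb`, so that `hisc` applies
  have hfin : ∀ᶠ k in atTop, h (xs k) ≠ ⊤ := hhxs.eventually (isOpen_ne.mem_nhds hdom)
  set xs' : ℕ → E := fun k => if h (xs k) = ⊤ then xb else xs k
  have hxs'_eq : xs' =ᶠ[atTop] xs := hfin.mono fun k hk => if_neg hk
  have hxs'_fin : ∀ k, h (xs' k) ≠ ⊤ := fun k => by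
    by_cases hk : h (xs k) = ⊤ <;> simp [xs', hk, hdom]
  obtain ⟨ys, hys, hle⟩ := hisc y hy xs' hxs'_fin ((tendsto_congr' hxs'_eq).mpr hxs)
  have hineq : ∀ᶠ k in atTop, ⟪vs k, ys k - xs k⟫ ≤ -(γ / 2) * ‖ys k - xs k‖ ^ 2 := by
    filter_upwards [hxs'_eq, hfin] with k hk hkfin
    exact IsStronglyQuasiconvex.inner_le_of_mem_frechetSubdiff hsqc hkfin (hproper _) (hsub k)
      (hk ▸ hle k)
  exact le_of_tendsto_of_tendsto (hvs.inner (hys.sub hxs))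
    ((((hys.sub hxs).norm).pow 2).const_mul _) hineq

theorem limiting_subgradient_strong_sublevel_inequality
    (h : E → EReal) (hproper : ∀ x, h x ≠ ⊥)
    (γ : ℝ) (hγ : 0 ≤ γ)
    (hsqc : ∀ x y : E, ∀ l ∈ Icc (0:ℝ) 1,
      h (l • y + (1 - l) • x) ≤
        max (h y) (h x) - ((l * (1 - l) * (γ / 2) * ‖x - y‖ ^ 2 : ℝ) : EReal))
    (xb : E) (hdom : h xb ≠ ⊤)
    (hisc : ∀ z : E, h z ≤ h xb → ∀ xs : ℕ → E,
      (∀ k, h (xs k) ≠ ⊤) → Tendsto xs atTop (nhds xb) →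
      ∃ ys : ℕ → E, Tendsto ys atTop (nhds z) ∧ ∀ k, h (ys k) ≤ h (xs k)) :
    ∀ v ∈ limitingSubdiff h xb, ∀ y : E, h y ≤ h xb →
      ⟪v, y - xb⟫ ≤ -(γ / 2) * ‖y - xb‖ ^ 2 :=
  limiting_subgradient_strong_sublevel_inequality_general h hproper γ hsqc xb hdom hisc
end
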